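/- arXiv:0812.1898 — 9 statements merged into one kernel-verified Lean document; each statement's English description precedes it below -/
import Mathlib

section
/- There exists an infinitely large element of K: there is some s : K such that f r < s for every real number r (equivalently, s is positive and not limited). Consequently there also exist infinitely large elements of K. -/
/-!
If no element of `K` lies above all of `f ℝ`, then `K` is archimedean, so it embeds into `ℝ` by
an ordered ring map `g`. Since `ℝ` has no ring endomorphism other than the identity, `g ∘ f = id`,
and as `g` is injective, `f` is surjective.
-/

section

variable {K : Type*} [Field K] [LinearOrder K] [IsStrictOrderedRing K]

theorem RingHom.monotone_real (f : ℝ →+* K) : Monotone f :=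
  ringHom_monotone (fun _ ↦ Real.isSquare_iff.mpr) f

theorem RingHom.archimedean_of_forall_le_map_real (f : ℝ →+* K)
    (h : ∀ s : K, ∃ r : ℝ, s ≤ f r) : Archimedean K := by
  refine archimedean_iff_nat_le.mpr fun s ↦ ?_
  obtain ⟨r, hr⟩ := h s
  obtain ⟨n, hn⟩ := exists_nat_ge r
  exact ⟨n, hr.trans (by simpa using f.monotone_real hn)⟩

theorem RingHom.surjective_of_archimedean_real [Archimedean K] (f : ℝ →+* K) :
    Function.Surjective f := by
  let g : K →+*o ℝ := ConditionallyCompleteLinearOrderedField.inducedOrderRingHom K ℝ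
  intro s
  refine ⟨g s, (g : K →+* ℝ).injective ?_⟩
  exact Real.ringHom_apply ((g : K →+* ℝ).comp f) (g s)

end

theorem exists_infinitely_large {K : Type*} [Field K] [LinearOrder K] [IsStrictOrderedRing K]
    (f : ℝ →+* K) (hf : ¬ Function.Surjective f) :
    ∃ s : K, ∀ r : ℝ, f r < s := by
  by_contra! h
  have : Archimedean K := f.archimedean_of_forall_le_map_real h
  exact hf f.surjective_of_archimedean_real
end

section
/- There exists a nonzero infinitesimal element of K: there is some ε : K with ε ≠ 0 such that |ε| < f r for every real number r > 0. -/
/-!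
Pick `x : K` outside the range of `f`. If `x` is infinitely large, then `x⁻¹` is a nonzero
infinitesimal. If `x` is limited, it is infinitely close to `f c` for `c = sup {r | f r < x}`,
its standard part, and `x - f c` is nonzero because `x` is not in the range of `f`.
-/

theorem Real.strictMono_ringHom {K : Type*} [Ring K] [LinearOrder K] [IsStrictOrderedRing K]
    (f : ℝ →+* K) : StrictMono f :=
  (ringHom_monotone (fun _ ↦ Real.isSquare_iff.mpr) f).strictMono_of_injective f.injective

namespace RealExtension

variable {K : Type*} [Field K] [LinearOrder K] [IsStrictOrderedRing K] (f : ℝ →+* K)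

def IsInfinitesimal (s : K) : Prop := ∀ r : ℝ, 0 < r → |s| < f r

def IsLimited (s : K) : Prop := ∃ r : ℝ, 0 < r ∧ |s| ≤ f r

variable {f}

theorem isInfinitesimal_inv_of_not_isLimited {x : K} (hx : ¬ IsLimited f x) :
    IsInfinitesimal f x⁻¹ := by
  simp only [IsLimited, not_exists, not_and, not_le] at hx
  intro r hr
  have hpos : 0 < f r⁻¹ := by simpa using Real.strictMono_ringHom f (inv_pos.mpr hr)
  calc |x⁻¹| = |x|⁻¹ := abs_inv x
    _ < (f r⁻¹)⁻¹ := inv_strictAnti₀ hpos (hx r⁻¹ (inv_pos.mpr hr))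
    _ = f r := by rw [← map_inv₀, inv_inv]

theorem ne_zero_of_not_isLimited {x : K} (hx : ¬ IsLimited f x) : x ≠ 0 := by
  rintro rfl
  exact hx ⟨1, one_pos, by simp⟩

theorem IsLimited.exists_isInfinitesimal_sub {x : K} (hx : IsLimited f x) :
    ∃ c : ℝ, IsInfinitesimal f (x - f c) := by
  have hf := Real.strictMono_ringHom f
  obtain ⟨b, -, hxb⟩ := hx
  obtain ⟨hbx, hxb⟩ := abs_le.mp hxb
  set S : Set ℝ := {r | f r < x}
  have hS : S.Nonempty := ⟨-b - 1, lt_of_lt_of_le (by simp) hbx⟩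
  have hSb : BddAbove S := ⟨b, fun s hs ↦ hf.lt_iff_lt.mp (lt_of_lt_of_le hs hxb) |>.le⟩
  refine ⟨sSup S, fun r hr ↦ abs_sub_lt_iff.mpr ⟨?_, ?_⟩⟩
  · have hcr : sSup S + r / 2 ∉ S := fun h ↦ by linarith [le_csSup hSb h]
    have : f (r / 2) < f r := hf (by linarith)
    simp only [S, Set.mem_ofPred_eq, not_lt, map_add] at hcr
    linarith
  · obtain ⟨s, hs, hlt⟩ := exists_lt_of_lt_csSup hS (by linarith : sSup S - r < sSup S)
    have : f (sSup S - r) < f s := hf hlt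
    rw [map_sub] at this
    linarith [show f s < x from hs]

end RealExtension

open RealExtension in
theorem exists_nonzero_infinitesimal {K : Type*} [Field K] [LinearOrder K] [IsStrictOrderedRing K]
    (f : ℝ →+* K) (hf : ¬ Function.Surjective f) :
    ∃ ε : K, ε ≠ 0 ∧ ∀ r : ℝ, 0 < r → |ε| < f r := by
  obtain ⟨x, hx⟩ := not_forall.mp hf
  by_cases hlim : IsLimited f x
  · obtain ⟨c, hc⟩ := hlim.exists_isInfinitesimal_sub
    exact ⟨x - f c, sub_ne_zero.mpr fun h ↦ hx ⟨c, h.symm⟩, hc⟩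
  · exact ⟨x⁻¹, inv_ne_zero (ne_zero_of_not_isLimited hlim),
      isInfinitesimal_inv_of_not_isLimited hlim⟩
end

section
/- There exists a function st : K → ℝ such that: (i) for every limited s : K, the element s - f (st s) is infinitesimal; (ii) st is additive on limited elements, i.e. st (s + t) = st s + st t whenever s and t are limited; (iii) st maps the set of limited elements onto ℝ (indeed st (f r) = r for every real r); and (iv) for limited s, st s = 0 if and only if s is infinitesimal. Consequently, the quotient of the additive group Gal(0) of limited elements of K by the additive subgroup Hal(0) of infinitesimal elements is isomorphic, as an additive group, to ℝ. -/
variable {K : Type*} [Field K] [LinearOrder K] [IsStrictOrderedRing K]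

/-- `s : K` is infinitesimal: `|s| < f r` for every real `r > 0`. -/
def IsInfinitesimal (f : ℝ →+* K) (s : K) : Prop := ∀ r : ℝ, 0 < r → |s| < f r

/-- `s : K` is limited: `|s| ≤ f r` for some real `r > 0`. -/
def IsLimited (f : ℝ →+* K) (s : K) : Prop := ∃ r : ℝ, 0 < r ∧ |s| ≤ f r

lemma map_pos_of_pos' (f : ℝ →+* K) {r : ℝ} (hr : 0 < r) : 0 < f r := by
  have h : f r = f (Real.sqrt r) ^ 2 := by
    rw [← map_pow, sq, Real.mul_self_sqrt hr.le]
  have h0 : f r ≠ 0 := fun h' => hr.ne' (f.injective (by simpa using h'))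
  have : 0 ≤ f r := h ▸ sq_nonneg _
  exact lt_of_le_of_ne this (Ne.symm h0)

/-- `Gal(0)`: the additive subgroup of limited elements of `K`. -/
def Gal0 (f : ℝ →+* K) : AddSubgroup K where
  carrier := {s | IsLimited f s}
  zero_mem' := ⟨1, one_pos, by simp⟩
  add_mem' := by
    rintro a b ⟨r, hr, ha⟩ ⟨r', hr', hb⟩
    exact ⟨r + r', by positivity, by
      calc |a + b| ≤ |a| + |b| := abs_add_le a b
        _ ≤ f r + f r' := add_le_add ha hb
        _ = f (r + r') := (map_add f r r').symm⟩
  neg_mem' := by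
    rintro a ⟨r, hr, ha⟩
    exact ⟨r, hr, by simpa using ha⟩

/-- `Hal(0)`: the additive subgroup of `Gal(0)` consisting of infinitesimal elements. -/
def Hal0 (f : ℝ →+* K) : AddSubgroup (Gal0 f) where
  carrier := {s | IsInfinitesimal f (s : K)}
  zero_mem' := by
    intro r hr
    simpa using map_pos_of_pos' f hr
  add_mem' := by
    rintro a b ha hb r hr
    have h2 : (0:ℝ) < r / 2 := by positivity
    calc |((a + b : Gal0 f) : K)| ≤ |(a : K)| + |(b : K)| := abs_add_le _ _
      _ < f (r / 2) + f (r / 2) := add_lt_add (ha _ h2) (hb _ h2)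
      _ = f r := by rw [← map_add]; norm_num
  neg_mem' := by
    rintro a ha r hr
    simpa using ha r hr

/-! A ring homomorphism `ℝ →+* K` is monotone because nonnegative reals are squares, and then
limited elements are those of nonnegative Archimedean class, infinitesimals those of positive
class. Mathlib's standard part `ArchimedeanClass.stdPart` (morally `s ↦ sup {r | f r < s}`) is
additive on elements of nonnegative class, fixes `f r`, and vanishes exactly on the elements of
positive class; restricted to `Gal(0)` it is a surjective homomorphism onto `ℝ` with kernel
`Hal(0)`. -/

open ArchimedeanClass

def RingHom.toOrderRingHomOfReal (f : ℝ →+* K) : ℝ →+*o K :=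
  { f with monotone' := ringHom_monotone (fun _ ↦ Real.isSquare_iff.mpr) f }

section StandardPart

variable (f : ℝ →+* K) {s : K}

theorem isLimited_iff_mk_nonneg : IsLimited f s ↔ 0 ≤ mk s := by
  constructor
  · rintro ⟨r, -, hs⟩
    obtain ⟨hlow, hup⟩ := abs_le.mp hs
    exact mk_nonneg_of_le_of_le_of_archimedean f.toOrderRingHomOfReal (r := -r)
      (by rwa [map_neg]) hup
  · intro hs
    obtain ⟨n, hn⟩ := exists_nat_ge_of_mk_nonneg ((mk_abs s).symm ▸ hs)
    refine ⟨n + 1, by positivity, ?_⟩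
    rw [map_add, map_natCast, map_one]
    linarith

theorem isInfinitesimal_iff_mk_pos : IsInfinitesimal f s ↔ 0 < mk s := by
  constructor
  · intro hs
    by_contra! hmk
    obtain ⟨q, hq, hqs⟩ := mk_le_mk_iff_ratCast.mp (hmk.trans_eq mk_one.symm)
    have hsq := hs q (by exact_mod_cast hq)
    rw [map_ratCast] at hsq
    rw [abs_one, mul_one] at hqs
    exact hqs.not_gt hsq
  · intro hs r hr
    have hfr : mk (f r) = 0 := mk_map_of_archimedean' f.toOrderRingHomOfReal hr.ne'
    exact lt_of_mk_lt_mk_of_nonneg (by rwa [hfr, mk_abs]) (map_pos_of_pos' f hr).le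

theorem isLimited_map (r : ℝ) : IsLimited f (f r) :=
  (isLimited_iff_mk_nonneg f).2 (mk_map_nonneg_of_archimedean f.toOrderRingHomOfReal r)

theorem isInfinitesimal_sub_stdPart (hs : IsLimited f s) : IsInfinitesimal f (s - f (stdPart s)) :=
  (isInfinitesimal_iff_mk_pos f).2
    (mk_sub_stdPart_pos f.toOrderRingHomOfReal ((isLimited_iff_mk_nonneg f).1 hs))

theorem stdPart_add_of_isLimited {t : K} (hs : IsLimited f s) (ht : IsLimited f t) :
    stdPart (s + t) = stdPart s + stdPart t :=
  stdPart_add ((isLimited_iff_mk_nonneg f).1 hs) ((isLimited_iff_mk_nonneg f).1 ht)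

theorem stdPart_eq_zero_iff_isInfinitesimal (hs : IsLimited f s) :
    stdPart s = 0 ↔ IsInfinitesimal f s := by
  rw [stdPart_eq_zero, isInfinitesimal_iff_mk_pos, lt_iff_le_and_ne, ne_comm,
    and_iff_right ((isLimited_iff_mk_nonneg f).1 hs)]

noncomputable def stdPartHom : Gal0 f →+ ℝ where
  toFun s := stdPart (s : K)
  map_zero' := stdPart_zero
  map_add' s t := stdPart_add_of_isLimited f s.2 t.2

theorem stdPartHom_surjective : Function.Surjective (stdPartHom f) :=
  fun r ↦ ⟨⟨f r, isLimited_map f r⟩, stdPart_map_real f.toOrderRingHomOfReal r⟩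

theorem ker_stdPartHom : (stdPartHom f).ker = Hal0 f := by
  ext s
  exact stdPart_eq_zero_iff_isInfinitesimal f s.2

end StandardPart

theorem standard_part_exists_general (f : ℝ →+* K) :
    (∃ st : K → ℝ,
      (∀ s : K, IsLimited f s → IsInfinitesimal f (s - f (st s))) ∧
      (∀ s t : K, IsLimited f s → IsLimited f t → st (s + t) = st s + st t) ∧
      (∀ r : ℝ, st (f r) = r) ∧
      (∀ s : K, IsLimited f s → (st s = 0 ↔ IsInfinitesimal f s))) ∧
    Nonempty ((Gal0 f ⧸ Hal0 f) ≃+ ℝ) :=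
  ⟨⟨stdPart, fun _ ↦ isInfinitesimal_sub_stdPart f, fun _ _ ↦ stdPart_add_of_isLimited f,
      stdPart_map_real f.toOrderRingHomOfReal, fun _ ↦ stdPart_eq_zero_iff_isInfinitesimal f⟩,
    ⟨(QuotientAddGroup.quotientAddEquivOfEq (ker_stdPartHom f).symm).trans
      (QuotientAddGroup.quotientKerEquivOfSurjective _ (stdPartHom_surjective f))⟩⟩

theorem standard_part_exists (f : ℝ →+* K) (hf : ¬ Function.Surjective f) :
    (∃ st : K → ℝ,
      (∀ s : K, IsLimited f s → IsInfinitesimal f (s - f (st s))) ∧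
      (∀ s t : K, IsLimited f s → IsLimited f t → st (s + t) = st s + st t) ∧
      (∀ r : ℝ, st (f r) = r) ∧
      (∀ s : K, IsLimited f s → (st s = 0 ↔ IsInfinitesimal f s))) ∧
    Nonempty ((Gal0 f ⧸ Hal0 f) ≃+ ℝ) :=
  standard_part_exists_general f
end

section
/- Define the relation R on K by R s t ↔ (s ≤ t or s - t is limited). Then: (i) R is reflexive; (ii) R is transitive; (iii) R is total (for all s t, R s t or R t s); (iv) for all s t, (R s t and R t s) holds if and only if s - t is limited; (v) R is translation invariant: R s t implies R (s + u) (t + u) for every u : K. Consequently R descends to a linear order on the quotient additive group K ⧸ Gal(0) which is compatible with addition, making Gal(K) := K ⧸ Gal(0) an ordered additive group. -/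
variable {K : Type*} [Field K] [LinearOrder K] [IsStrictOrderedRing K]

/-! Only the convexity of `Gal(0)` in `K` matters: for any convex subgroup `H` of a linearly
ordered group, "`s ≤ t` or `s - t ∈ H`" is a translation invariant total preorder whose
associated equivalence is congruence modulo `H`, so it descends to a linear order on `G ⧸ H`.
Transitivity is where convexity enters: if `u < s` then `0 < s - u` is squeezed below
`s - t` or `t - u`. -/

namespace AddSubgroup

variable {G : Type*} [AddCommGroup G] [LinearOrder G] (H : AddSubgroup G)

def LeMod (s t : G) : Prop := s ≤ t ∨ s - t ∈ H

variable {H}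

theorem leMod_refl (s : G) : H.LeMod s s := Or.inl le_rfl

theorem leMod_total (s t : G) : H.LeMod s t ∨ H.LeMod t s :=
  (le_total s t).imp Or.inl Or.inl

theorem leMod_of_sub_mem {s t : G} (h : s - t ∈ H) : H.LeMod s t := Or.inr h

theorem leMod_and_leMod_iff {s t : G} : H.LeMod s t ∧ H.LeMod t s ↔ s - t ∈ H := by
  refine ⟨?_, fun h => ⟨leMod_of_sub_mem h, leMod_of_sub_mem (by rwa [← neg_mem_iff, neg_sub])⟩⟩
  rintro ⟨hst | hst, hts | hts⟩
  · simp [le_antisymm hst hts]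
  · rwa [← neg_mem_iff, neg_sub]
  · exact hst
  · exact hst

theorem mem_of_nonneg_of_le (hH : (H : Set G).OrdConnected) {a b : G} (ha : 0 ≤ a) (hab : a ≤ b)
    (hb : b ∈ H) : a ∈ H :=
  hH.out H.zero_mem hb ⟨ha, hab⟩

variable [IsOrderedAddMonoid G]

theorem leMod_add_right {s t : G} (u : G) (h : H.LeMod s t) : H.LeMod (s + u) (t + u) := by
  unfold LeMod
  rwa [add_le_add_iff_right, add_sub_add_right_eq_sub]

theorem leMod_trans (hH : (H : Set G).OrdConnected) {s t u : G}
    (hst : H.LeMod s t) (htu : H.LeMod t u) : H.LeMod s u := by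
  rcases le_or_gt s u with hsu | hus
  · exact Or.inl hsu
  have hsu : 0 ≤ s - u := (sub_pos.2 hus).le
  refine Or.inr ?_
  rcases hst with hst | hst <;> rcases htu with htu | htu
  · exact absurd (hst.trans htu) hus.not_ge
  · exact mem_of_nonneg_of_le hH hsu (sub_le_sub_right hst u) htu
  · exact mem_of_nonneg_of_le hH hsu (sub_le_sub_left htu s) hst
  · simpa using H.add_mem hst htu

theorem leMod_congr (hH : (H : Set G).OrdConnected) {s s' t t' : G}
    (hs : QuotientAddGroup.leftRel H s s') (ht : QuotientAddGroup.leftRel H t t')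
    (h : H.LeMod s t) : H.LeMod s' t' := by
  rw [QuotientAddGroup.leftRel_apply, neg_add_eq_sub] at hs ht
  refine leMod_trans hH (leMod_trans hH (leMod_of_sub_mem hs) h) (leMod_of_sub_mem ?_)
  rwa [← neg_mem_iff, neg_sub]

def quotientLE (hH : (H : Set G).OrdConnected) : G ⧸ H → G ⧸ H → Prop :=
  Quotient.lift₂ H.LeMod fun _ _ _ _ hs ht => propext
    ⟨leMod_congr hH hs ht,
      leMod_congr hH ((QuotientAddGroup.leftRel H).symm hs) ((QuotientAddGroup.leftRel H).symm ht)⟩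

theorem quotientLE_mk (hH : (H : Set G).OrdConnected) (s t : G) :
    H.quotientLE hH s t ↔ H.LeMod s t :=
  Iff.rfl

theorem isLinearOrder_quotientLE (hH : (H : Set G).OrdConnected) :
    IsLinearOrder (G ⧸ H) (H.quotientLE hH) where
  refl a := Quotient.inductionOn a leMod_refl
  trans a b c := Quotient.inductionOn₃ a b c fun _ _ _ => leMod_trans hH
  antisymm a b := Quotient.inductionOn₂ a b fun _ _ hst hts =>
    QuotientAddGroup.eq_iff_sub_mem.2 (leMod_and_leMod_iff.1 ⟨hst, hts⟩)
  total a b := Quotient.inductionOn₂ a b leMod_total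

theorem quotientLE_add_right (hH : (H : Set G).OrdConnected) (a b c : G ⧸ H) :
    H.quotientLE hH a b → H.quotientLE hH (a + c) (b + c) :=
  Quotient.inductionOn₃ a b c fun _ _ u => leMod_add_right u

end AddSubgroup

theorem ordConnected_gal0 (f : ℝ →+* K) : (Gal0 f : Set K).OrdConnected := by
  refine ⟨fun x ⟨r, hr, hx⟩ y ⟨r', hr', hy⟩ z hz => ⟨r + r', by positivity, ?_⟩⟩
  calc |z| ≤ max |x| |y| := abs_le_max_abs_abs hz.1 hz.2
    _ ≤ |x| + |y| := max_le_add_of_nonneg (abs_nonneg x) (abs_nonneg y)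
    _ ≤ f r + f r' := add_le_add hx hy
    _ = f (r + r') := (map_add f r r').symm

theorem galaxy_order_general (f : ℝ →+* K) :
    let R : K → K → Prop := fun s t => s ≤ t ∨ IsLimited f (s - t)
    (∀ s, R s s) ∧
    (∀ s t u, R s t → R t u → R s u) ∧
    (∀ s t, R s t ∨ R t s) ∧
    (∀ s t, (R s t ∧ R t s) ↔ IsLimited f (s - t)) ∧
    (∀ s t u, R s t → R (s + u) (t + u)) ∧
    (∃ le : (K ⧸ Gal0 f) → (K ⧸ Gal0 f) → Prop,
      (∀ s t : K, le (QuotientAddGroup.mk s) (QuotientAddGroup.mk t) ↔ R s t) ∧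
      IsLinearOrder (K ⧸ Gal0 f) le ∧
      (∀ a b c : K ⧸ Gal0 f, le a b → le (a + c) (b + c))) := by
  intro R
  have hH := ordConnected_gal0 f
  exact ⟨AddSubgroup.leMod_refl (H := Gal0 f), fun _ _ _ => AddSubgroup.leMod_trans hH,
    AddSubgroup.leMod_total (H := Gal0 f), fun _ _ => AddSubgroup.leMod_and_leMod_iff (H := Gal0 f),
    fun _ _ u => AddSubgroup.leMod_add_right (H := Gal0 f) u, (Gal0 f).quotientLE hH,
    AddSubgroup.quotientLE_mk hH, AddSubgroup.isLinearOrder_quotientLE hH,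
    AddSubgroup.quotientLE_add_right hH⟩

theorem galaxy_order (f : ℝ →+* K) (hf : ¬ Function.Surjective f) :
    let R : K → K → Prop := fun s t => s ≤ t ∨ IsLimited f (s - t)
    (∀ s, R s s) ∧
    (∀ s t u, R s t → R t u → R s u) ∧
    (∀ s t, R s t ∨ R t s) ∧
    (∀ s t, (R s t ∧ R t s) ↔ IsLimited f (s - t)) ∧
    (∀ s t u, R s t → R (s + u) (t + u)) ∧
    (∃ le : (K ⧸ Gal0 f) → (K ⧸ Gal0 f) → Prop,
      (∀ s t : K, le (QuotientAddGroup.mk s) (QuotientAddGroup.mk t) ↔ R s t) ∧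
      IsLinearOrder (K ⧸ Gal0 f) le ∧
      (∀ a b c : K ⧸ Gal0 f, le a b → le (a + c) (b + c))) :=
  galaxy_order_general f
end

section
/- (Two γ-contractions of the same galactic space are isometric.) Let (δ, Δ) be galactic space data on a type F and let γ : K be limited with 0 < γ. Suppose g₁ : F → F₁ is a γ-contraction onto galactic space data (δ₁, Δ₁) on F₁, and g₂ : F → F₂ is a γ-contraction onto galactic space data (δ₂, Δ₂) on F₂. Then there exists a bijection h : F₁ → F₂ with h ∘ g₁ = g₂ which is an isometry: for all a b : F₁, δ₂ (h a) (h b) = δ₁ a b and Δ₂ (h a) (h b) - Δ₁ a b is limited. -/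
/-! A contraction determines the distances of the images: `δ' (g x) (g y)` is the standard part
of `γ * δ x y` (or of `γ * Δ x y`), and standard parts are unique because a nonzero real is never
infinitesimal. Hence `g₁` and `g₂` identify the same points, `g₂` factors through `g₁` by a
bijection, and that bijection preserves `δ`; the `Δ`'s agree up to a limited error since both are
within a limited error of `γ * Δ x y`. -/

open ENNReal

variable {K : Type*} [Field K] [LinearOrder K] [IsStrictOrderedRing K]

/-- Galactic space data on a type `F`: an extended distance `δ` together with a
galaxy-valued distance `Δ` between metric components, encoded on points. -/
structure GalacticData (K : Type*) [Field K] [LinearOrder K] [IsStrictOrderedRing K] (f : ℝ →+* K) (F : Type*) where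
  δ : F → F → ℝ≥0∞
  Δ : F → F → K
  δ_self : ∀ x, δ x x = 0
  δ_pos : ∀ x y, x ≠ y → 0 < δ x y
  δ_symm : ∀ x y, δ x y = δ y x
  δ_triangle : ∀ x y z, δ x z ≤ δ x y + δ y z
  Δ_congr : ∀ x x' y y', δ x x' ≠ ⊤ → δ y y' ≠ ⊤ → IsLimited f (Δ x y - Δ x' y')
  Δ_symm : ∀ x y, IsLimited f (Δ x y - Δ y x)
  Δ_limited_iff : ∀ x y, IsLimited f (Δ x y) ↔ δ x y ≠ ⊤
  Δ_pos : ∀ x y, δ x y = ⊤ → 0 < Δ x y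
  Δ_triangle : ∀ x y z, Δ x z ≤ Δ x y + Δ y z ∨ IsLimited f (Δ x z - (Δ x y + Δ y z))

/-- `g : F → F'` is a `γ`-contraction between galactic space data. -/
def IsContraction (f : ℝ →+* K) {F F' : Type*}
    (G : GalacticData K f F) (G' : GalacticData K f F') (γ : K) (g : F → F') : Prop :=
  Function.Surjective g ∧
  ∀ x y : F,
    (G.δ x y ≠ ⊤ →
      G'.δ (g x) (g y) ≠ ⊤ ∧
      IsInfinitesimal f (γ * f (G.δ x y).toReal - f (G'.δ (g x) (g y)).toReal)) ∧
    (G.δ x y = ⊤ →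
      (G'.δ (g x) (g y) = ⊤ ↔ ¬ IsLimited f (γ * G.Δ x y)) ∧
      (IsLimited f (γ * G.Δ x y) →
        IsInfinitesimal f (γ * G.Δ x y - f (G'.δ (g x) (g y)).toReal))) ∧
    IsLimited f (G'.Δ (g x) (g y) - γ * G.Δ x y)

open Function

section

variable {f : ℝ →+* K}

lemma IsLimited.sub {a b : K} (ha : IsLimited f a) (hb : IsLimited f b) :
    IsLimited f (a - b) := by
  obtain ⟨r, hr, har⟩ := ha
  obtain ⟨t, ht, hbt⟩ := hb
  refine ⟨r + t, add_pos hr ht, ?_⟩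
  calc |a - b| ≤ |a| + |b| := abs_sub _ _
    _ ≤ f r + f t := add_le_add har hbt
    _ = f (r + t) := (map_add f r t).symm

lemma IsInfinitesimal.sub {a b : K} (ha : IsInfinitesimal f a) (hb : IsInfinitesimal f b) :
    IsInfinitesimal f (a - b) := by
  intro r hr
  calc |a - b| ≤ |a| + |b| := abs_sub _ _
    _ < f (r / 2) + f (r / 2) := add_lt_add (ha _ (half_pos hr)) (hb _ (half_pos hr))
    _ = f r := by rw [← map_add, add_halves]

lemma eq_zero_of_isInfinitesimal_map {t : ℝ} (h : IsInfinitesimal f (f t)) : t = 0 := by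
  by_contra ht
  have hlt := h |t| (abs_pos.mpr ht)
  -- `f |t|` is `f t` or `-f t`, both of which are at most `|f t|`
  rcases abs_choice t with habs | habs <;> rw [habs] at hlt
  · exact hlt.not_ge (le_abs_self _)
  · rw [map_neg] at hlt
    exact hlt.not_ge (neg_le_abs _)

lemma eq_of_isInfinitesimal_sub_map {c : K} {t₁ t₂ : ℝ}
    (h₁ : IsInfinitesimal f (c - f t₁)) (h₂ : IsInfinitesimal f (c - f t₂)) : t₁ = t₂ := by
  have h := h₁.sub h₂
  rw [show c - f t₁ - (c - f t₂) = f (t₂ - t₁) by rw [map_sub]; ring] at h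
  exact (sub_eq_zero.mp (eq_zero_of_isInfinitesimal_map h)).symm

lemma ENNReal.eq_of_isInfinitesimal_sub_toReal {c : K} {d₁ d₂ : ℝ≥0∞} (hd₁ : d₁ ≠ ⊤)
    (hd₂ : d₂ ≠ ⊤) (h₁ : IsInfinitesimal f (c - f d₁.toReal))
    (h₂ : IsInfinitesimal f (c - f d₂.toReal)) : d₁ = d₂ :=
  (ENNReal.toReal_eq_toReal_iff' hd₁ hd₂).mp (eq_of_isInfinitesimal_sub_map h₁ h₂)

lemma GalacticData.eq_of_δ_eq_zero {F : Type*} (G : GalacticData K f F) {a b : F}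
    (h : G.δ a b = 0) : a = b := by
  by_contra hab
  exact (G.δ_pos a b hab).ne' h

lemma Function.Surjective.exists_bijective_comp_eq {α β γ : Type*} {g₁ : α → β} {g₂ : α → γ}
    (hg₁ : Surjective g₁) (hg₂ : Surjective g₂) (hker : ∀ x y, g₁ x = g₁ y ↔ g₂ x = g₂ y) :
    ∃ h : β → γ, Bijective h ∧ h ∘ g₁ = g₂ := by
  have hcomp : g₂ ∘ surjInv hg₁ ∘ g₁ = g₂ :=
    funext fun x ↦ (hker _ _).mp (surjInv_eq hg₁ (g₁ x))
  refine ⟨g₂ ∘ surjInv hg₁, ⟨fun a b hab ↦ ?_, ?_⟩, hcomp⟩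
  · rw [← surjInv_eq hg₁ a, ← surjInv_eq hg₁ b]
    exact (hker _ _).mpr hab
  · intro c
    obtain ⟨x, rfl⟩ := hg₂ c
    exact ⟨g₁ x, congrFun hcomp x⟩

namespace IsContraction

variable {F F₁ F₂ : Type*} {G : GalacticData K f F} {G₁ : GalacticData K f F₁}
  {G₂ : GalacticData K f F₂} {γ : K} {g₁ : F → F₁} {g₂ : F → F₂}

lemma δ_map_eq (hg₁ : IsContraction f G G₁ γ g₁) (hg₂ : IsContraction f G G₂ γ g₂) (x y : F) :
    G₁.δ (g₁ x) (g₁ y) = G₂.δ (g₂ x) (g₂ y) := by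
  obtain ⟨hfin₁, hinf₁, -⟩ := hg₁.2 x y
  obtain ⟨hfin₂, hinf₂, -⟩ := hg₂.2 x y
  by_cases hxy : G.δ x y = ⊤
  · obtain ⟨htop₁, hstd₁⟩ := hinf₁ hxy
    obtain ⟨htop₂, hstd₂⟩ := hinf₂ hxy
    by_cases hlim : IsLimited f (γ * G.Δ x y)
    · exact ENNReal.eq_of_isInfinitesimal_sub_toReal (fun h ↦ htop₁.mp h hlim)
        (fun h ↦ htop₂.mp h hlim) (hstd₁ hlim) (hstd₂ hlim)
    · rw [htop₁.mpr hlim, htop₂.mpr hlim]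
  · obtain ⟨hne₁, hstd₁⟩ := hfin₁ hxy
    obtain ⟨hne₂, hstd₂⟩ := hfin₂ hxy
    exact ENNReal.eq_of_isInfinitesimal_sub_toReal hne₁ hne₂ hstd₁ hstd₂

lemma map_eq_iff (hg₁ : IsContraction f G G₁ γ g₁) (hg₂ : IsContraction f G G₂ γ g₂) (x y : F) :
    g₁ x = g₁ y ↔ g₂ x = g₂ y := by
  constructor <;> intro h
  · exact G₂.eq_of_δ_eq_zero (by rw [← hg₁.δ_map_eq hg₂, h, G₁.δ_self])
  · exact G₁.eq_of_δ_eq_zero (by rw [hg₁.δ_map_eq hg₂, h, G₂.δ_self])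

lemma isLimited_Δ_map_sub (hg₁ : IsContraction f G G₁ γ g₁) (hg₂ : IsContraction f G G₂ γ g₂)
    (x y : F) : IsLimited f (G₂.Δ (g₂ x) (g₂ y) - G₁.Δ (g₁ x) (g₁ y)) := by
  have h := (hg₂.2 x y).2.2.sub (hg₁.2 x y).2.2
  rwa [sub_sub_sub_cancel_right] at h

end IsContraction

end

theorem contractions_isometric_general (f : ℝ →+* K)
    {F F₁ F₂ : Type*} (G : GalacticData K f F)
    (G₁ : GalacticData K f F₁) (G₂ : GalacticData K f F₂)
    (γ : K)
    (g₁ : F → F₁) (g₂ : F → F₂)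
    (hg₁ : IsContraction f G G₁ γ g₁) (hg₂ : IsContraction f G G₂ γ g₂) :
    ∃ h : F₁ → F₂, Function.Bijective h ∧ h ∘ g₁ = g₂ ∧
      ∀ a b : F₁, G₂.δ (h a) (h b) = G₁.δ a b ∧
        IsLimited f (G₂.Δ (h a) (h b) - G₁.Δ a b) := by
  obtain ⟨h, hbij, hcomp⟩ := hg₁.1.exists_bijective_comp_eq hg₂.1 (hg₁.map_eq_iff hg₂)
  refine ⟨h, hbij, hcomp, fun a b ↦ ?_⟩
  obtain ⟨x, rfl⟩ := hg₁.1 a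
  obtain ⟨y, rfl⟩ := hg₁.1 b
  rw [show h (g₁ x) = g₂ x from congrFun hcomp x, show h (g₁ y) = g₂ y from congrFun hcomp y]
  exact ⟨(hg₁.δ_map_eq hg₂ x y).symm, hg₁.isLimited_Δ_map_sub hg₂ x y⟩

/-- Two `γ`-contractions of the same galactic space are isometric. -/
theorem contractions_isometric (f : ℝ →+* K) (hf : ¬ Function.Surjective f)
    {F F₁ F₂ : Type*} (G : GalacticData K f F)
    (G₁ : GalacticData K f F₁) (G₂ : GalacticData K f F₂)
    (γ : K) (hγlim : IsLimited f γ) (hγpos : 0 < γ)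
    (g₁ : F → F₁) (g₂ : F → F₂)
    (hg₁ : IsContraction f G G₁ γ g₁) (hg₂ : IsContraction f G G₂ γ g₂) :
    ∃ h : F₁ → F₂, Function.Bijective h ∧ h ∘ g₁ = g₂ ∧
      ∀ a b : F₁, G₂.δ (h a) (h b) = G₁.δ a b ∧
        IsLimited f (G₂.Δ (h a) (h b) - G₁.Δ a b) :=
  contractions_isometric_general f G G₁ G₂ γ g₁ g₂ hg₁ hg₂
end

section
/- For every scale α : ℝ* with 0 < α, there is a well-defined map δ_α : X_α → X_α → ℝ≥0∞ such that for all x y : *X, δ_α (π_α x) (π_α y) = ⊤ if α * *d x y is infinite, and δ_α (π_α x) (π_α y) = ENNReal.ofReal (st (α * *d x y)) otherwise; moreover δ_α is a generalized distance: δ_α ξ ξ = 0, δ_α ξ η = δ_α η ξ > 0 for ξ ≠ η, and δ_α ξ ζ ≤ δ_α ξ η + δ_α η ζ. -/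
open Filter Hyperreal ENNReal

/-- The germ-wise extension of the distance of a metric space to the germ space
`*X = ((hyperfilter ℕ : Filter ℕ)).Germ X`, with values in the hyperreals. -/
noncomputable def hdist {X : Type*} [MetricSpace X]
    (x y : ((hyperfilter ℕ : Filter ℕ)).Germ X) : ℝ* :=
  Filter.Germ.map₂ dist x y

/-- The relation `x ≈_α y`: `α * *d x y` is infinitesimal. -/
def scaleRel {X : Type*} [MetricSpace X] (α : ℝ*)
    (x y : ((hyperfilter ℕ : Filter ℕ)).Germ X) : Prop :=
  Infinitesimal (α * hdist x y)

/-- The `α`-scaling `X_α` of `X`: the quotient of `*X` by `≈_α`. -/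
def Scaled (X : Type*) [MetricSpace X] (α : ℝ*) : Type _ :=
  Quot (scaleRel (X := X) α)

/-- The canonical projection `π_α : *X → X_α`. -/
def scaleProj {X : Type*} [MetricSpace X] (α : ℝ*)
    (x : ((hyperfilter ℕ : Filter ℕ)).Germ X) : Scaled X α :=
  Quot.mk (scaleRel α) x


/-!
The rescaled distance `α * *d` on `*X` is nonnegative, symmetric and subadditive. On nonnegative
elements of an ordered field, the standard part with infinite elements sent to `⊤` is monotone
and additive, so it turns `α * *d` into an extended pseudometric on `*X` whose zero relation is
exactly `≈_α`; such a pseudometric descends to a metric on the quotient `X_α`.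
-/

namespace ArchimedeanClass

variable {K : Type*} [Field K] [LinearOrder K] [IsOrderedRing K] {x y : K}

/-- Mathlib's hyperreal `Infinite`, `Infinitesimal` and `st` are deprecated in favour of
`ArchimedeanClass.mk` and `stdPart`, in which the argument is carried out. -/
noncomputable def stdPartENNReal (x : K) : ℝ≥0∞ :=
  if mk x < 0 then ⊤ else ENNReal.ofReal (stdPart x)

theorem stdPartENNReal_of_mk_neg (h : mk x < 0) : stdPartENNReal x = ⊤ := if_pos h

theorem stdPartENNReal_of_mk_nonneg (h : 0 ≤ mk x) :
    stdPartENNReal x = ENNReal.ofReal (stdPart x) := if_neg h.not_gt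

@[simp]
theorem stdPartENNReal_zero : stdPartENNReal (0 : K) = 0 := by
  simp [stdPartENNReal_of_mk_nonneg]

theorem stdPartENNReal_eq_zero_iff (hx : 0 ≤ x) : stdPartENNReal x = 0 ↔ 0 < mk x := by
  rcases lt_or_ge (mk x) 0 with h | h
  · simpa [stdPartENNReal_of_mk_neg h] using h.not_gt
  · rw [stdPartENNReal_of_mk_nonneg h, ENNReal.ofReal_eq_zero,
      (stdPart_nonneg hx).ge_iff_eq', stdPart_eq_zero, h.lt_iff_ne']

theorem stdPartENNReal_monotoneOn : MonotoneOn (stdPartENNReal (K := K)) (Set.Ici 0) := by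
  intro x hx y hy hxy
  rcases lt_or_ge (mk y) 0 with h | h
  · simp [stdPartENNReal_of_mk_neg h]
  · have hx' : 0 ≤ mk x := h.trans (mk_antitoneOn hx hy hxy)
    rw [stdPartENNReal_of_mk_nonneg h, stdPartENNReal_of_mk_nonneg hx']
    exact ENNReal.ofReal_le_ofReal (stdPart_monotoneOn hx' h hxy)

theorem stdPartENNReal_add (hx : 0 ≤ x) (hy : 0 ≤ y) :
    stdPartENNReal (x + y) = stdPartENNReal x + stdPartENNReal y := by
  have hxy : 0 ≤ x + y := add_nonneg hx hy
  rcases lt_or_ge (mk x) 0 with h | h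
  · have : mk (x + y) < 0 := (mk_antitoneOn hx hxy (le_add_of_nonneg_right hy)).trans_lt h
    simp [stdPartENNReal_of_mk_neg h, stdPartENNReal_of_mk_neg this]
  rcases lt_or_ge (mk y) 0 with h' | h'
  · have : mk (x + y) < 0 := (mk_antitoneOn hy hxy (le_add_of_nonneg_left hx)).trans_lt h'
    simp [stdPartENNReal_of_mk_neg h', stdPartENNReal_of_mk_neg this]
  rw [stdPartENNReal_of_mk_nonneg h, stdPartENNReal_of_mk_nonneg h',
    stdPartENNReal_of_mk_nonneg ((le_min h h').trans (min_le_mk_add x y)), stdPart_add h h',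
    ENNReal.ofReal_add (stdPart_nonneg hx) (stdPart_nonneg hy)]

end ArchimedeanClass

section HyperDist

variable {X : Type*} [MetricSpace X] (x y z : (hyperfilter ℕ : Filter ℕ).Germ X)

theorem hdist_nonneg : 0 ≤ hdist x y :=
  Germ.inductionOn₂ x y fun _ _ ↦ Germ.coe_nonneg.mpr (.of_forall fun _ ↦ dist_nonneg)

theorem hdist_self : hdist x x = 0 :=
  Germ.inductionOn x fun _ ↦ Germ.coe_eq.mpr (.of_forall fun _ ↦ dist_self _)

theorem hdist_comm : hdist x y = hdist y x :=
  Germ.inductionOn₂ x y fun _ _ ↦ Germ.coe_eq.mpr (.of_forall fun _ ↦ dist_comm _ _)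

theorem hdist_triangle : hdist x z ≤ hdist x y + hdist y z :=
  Germ.inductionOn₃ x y z fun _ _ _ ↦ Germ.coe_le.mpr (.of_forall fun _ ↦ dist_triangle _ _ _)

end HyperDist

section ScaledEDist

open ArchimedeanClass

variable {X : Type*} [MetricSpace X] {α : ℝ*} {x x' y : (hyperfilter ℕ : Filter ℕ).Germ X}

variable (α x y) in
noncomputable def scaledEDist : ℝ≥0∞ :=
  stdPartENNReal (α * hdist x y)

variable (α x y) in
theorem scaledEDist_comm : scaledEDist α x y = scaledEDist α y x := by
  rw [scaledEDist, scaledEDist, hdist_comm]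

variable (α x) in
@[simp]
theorem scaledEDist_self : scaledEDist α x x = 0 := by
  simp [scaledEDist, hdist_self]

theorem scaledEDist_triangle (hα : 0 ≤ α) (x y z : (hyperfilter ℕ : Filter ℕ).Germ X) :
    scaledEDist α x z ≤ scaledEDist α x y + scaledEDist α y z := by
  have hd (a b : (hyperfilter ℕ : Filter ℕ).Germ X) : 0 ≤ α * hdist a b :=
    mul_nonneg hα (hdist_nonneg a b)
  calc stdPartENNReal (α * hdist x z)
      ≤ stdPartENNReal (α * hdist x y + α * hdist y z) :=
        stdPartENNReal_monotoneOn (hd x z) (add_nonneg (hd x y) (hd y z))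
          (by rw [← mul_add]; exact mul_le_mul_of_nonneg_left (hdist_triangle x y z) hα)
    _ = _ := stdPartENNReal_add (hd x y) (hd y z)

set_option linter.deprecated false in
theorem scaledEDist_eq_zero_iff (hα : 0 ≤ α) : scaledEDist α x y = 0 ↔ scaleRel α x y := by
  rw [scaledEDist, stdPartENNReal_eq_zero_iff (mul_nonneg hα (hdist_nonneg x y)), scaleRel,
    infinitesimal_iff]

theorem scaledEDist_congr_left (hα : 0 ≤ α) (h : scaleRel α x x')
    (y : (hyperfilter ℕ : Filter ℕ).Germ X) :
    scaledEDist α x y = scaledEDist α x' y := by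
  have h₀ := (scaledEDist_eq_zero_iff hα).mpr h
  refine le_antisymm ?_ ?_
  · simpa [h₀] using scaledEDist_triangle hα x x' y
  · simpa [scaledEDist_comm α x' x, h₀] using scaledEDist_triangle hα x' x y

end ScaledEDist

namespace Scaled

variable {X : Type*} [MetricSpace X] {α : ℝ*}

noncomputable def edist (hα : 0 ≤ α) : Scaled X α → Scaled X α → ℝ≥0∞ :=
  Quot.lift₂ (scaledEDist α)
    (fun x _ _ h ↦ by
      rw [scaledEDist_comm α x, scaledEDist_comm α x, scaledEDist_congr_left hα h])
    (fun _ _ y h ↦ scaledEDist_congr_left hα h y)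

@[simp]
theorem edist_scaleProj (hα : 0 ≤ α) (x y : (hyperfilter ℕ : Filter ℕ).Germ X) :
    edist hα (scaleProj α x) (scaleProj α y) = scaledEDist α x y := rfl

theorem edist_self (hα : 0 ≤ α) (ξ : Scaled X α) : edist hα ξ ξ = 0 :=
  Quot.induction_on ξ fun x ↦ scaledEDist_self α x

theorem edist_comm (hα : 0 ≤ α) (ξ η : Scaled X α) : edist hα ξ η = edist hα η ξ :=
  Quot.induction_on₂ ξ η fun x y ↦ scaledEDist_comm α x y

theorem edist_triangle (hα : 0 ≤ α) (ξ η ζ : Scaled X α) :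
    edist hα ξ ζ ≤ edist hα ξ η + edist hα η ζ :=
  Quot.induction_on₃ ξ η ζ (scaledEDist_triangle hα)

theorem edist_pos_of_ne (hα : 0 ≤ α) {ξ η : Scaled X α} (h : ξ ≠ η) :
    0 < edist hα ξ η := by
  induction ξ, η using Quot.induction_on₂ with | h x y =>
  exact pos_iff_ne_zero.mpr fun h₀ ↦ h (Quot.sound ((scaledEDist_eq_zero_iff hα).mp h₀))

end Scaled

set_option linter.deprecated false in
/-- There is a well-defined generalized distance `δ_α` on `X_α`. -/
theorem exists_scaled_dist {X : Type*} [MetricSpace X] (α : ℝ*) (hα : 0 < α) :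
    ∃ δα : Scaled X α → Scaled X α → ℝ≥0∞,
      (∀ x y : ((hyperfilter ℕ : Filter ℕ)).Germ X,
        (Infinite (α * hdist x y) → δα (scaleProj α x) (scaleProj α y) = ⊤) ∧
        (¬ Infinite (α * hdist x y) →
          δα (scaleProj α x) (scaleProj α y) = ENNReal.ofReal (st (α * hdist x y)))) ∧
      (∀ ξ : Scaled X α, δα ξ ξ = 0) ∧
      (∀ ξ η : Scaled X α, ξ ≠ η → δα ξ η = δα η ξ ∧ 0 < δα ξ η) ∧
      (∀ ξ η ζ : Scaled X α, δα ξ ζ ≤ δα ξ η + δα η ζ) := by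
  refine ⟨Scaled.edist hα.le, fun x y ↦ ⟨fun h ↦ ?_, fun h ↦ ?_⟩,
    Scaled.edist_self hα.le,
    fun ξ η h ↦ ⟨Scaled.edist_comm hα.le ξ η, Scaled.edist_pos_of_ne hα.le h⟩,
    Scaled.edist_triangle hα.le⟩
  · exact ArchimedeanClass.stdPartENNReal_of_mk_neg (infinite_iff.mp h)
  · rw [Scaled.edist_scaleProj, scaledEDist, st_eq,
      ArchimedeanClass.stdPartENNReal_of_mk_nonneg (not_lt.mp (infinite_iff.not.mp h))]
end

section
/- Let α β : ℝ* with 0 < β ≤ α and suppose β/α is not infinitesimal. Then the equivalence relations ≈_α and ≈_β on *X coincide (for all x y : *X, α * *d x y is infinitesimal if and only if β * *d x y is infinitesimal); consequently the transition map π_{β,α} : X_α → X_β is a bijection, and it is a homeomorphism for the topologies on X_α and X_β induced by the extended distances δ_α and δ_β. -/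
/-! A ratio `q = β/α` that is neither infinite nor infinitesimal has a standard part
`0 < st q < ∞`, and multiplication by `q` preserves being infinitesimal and being infinite.
Since `β * *d = q * (α * *d)`, the relations `≈_α` and `≈_β` agree, so the transition map is a
bijection, and `δ_β = st q • δ_α` under it: balls of `δ_β` pull back to balls of `δ_α` and
conversely, which identifies the two ball topologies. -/

set_option linter.deprecated false

open Filter Hyperreal ENNReal

open Topology TopologicalSpace

open scoped Classical in
/-- `δ_α (π_α x) (π_α y) = stENNReal (α * *d x y)`. -/
noncomputable def Hyperreal.stENNReal (z : ℝ*) : ℝ≥0∞ :=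
  if Infinite z then ⊤ else ENNReal.ofReal (st z)

def Hyperreal.Appreciable (q : ℝ*) : Prop :=
  ¬Infinite q ∧ ¬Infinitesimal q

namespace Hyperreal

theorem eq_stENNReal_iff {z : ℝ*} {a : ℝ≥0∞} :
    a = stENNReal z ↔ (Infinite z → a = ⊤) ∧ (¬Infinite z → a = ENNReal.ofReal (st z)) := by
  unfold stENNReal
  split_ifs with hz <;> simp [hz]

theorem not_infinite_div_of_le {α β : ℝ*} (hβ : 0 ≤ β) (hβα : β ≤ α) : ¬Infinite (β / α) := by
  refine not_infinite_iff_exist_lt_gt.2 ⟨-1, 2, ?_, ?_⟩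
  · calc ((-1 : ℝ) : ℝ*) < 0 := by norm_num
      _ ≤ β / α := div_nonneg hβ (hβ.trans hβα)
  · calc β / α ≤ 1 := div_le_one_of_le₀ hβα (hβ.trans hβα)
      _ < ((2 : ℝ) : ℝ*) := by norm_num

theorem infinitesimal_mul_of_not_infinite {p w : ℝ*} (hp : ¬Infinite p) (hw : Infinitesimal w) :
    Infinitesimal (p * w) := by
  show IsSt _ 0
  simpa only [mul_zero] using (isSt_st' hp).mul hw

namespace Appreciable

variable {q : ℝ*} (hq : Appreciable q)
include hq

theorem ne_zero : q ≠ 0 :=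
  fun h => hq.2 (h ▸ infinitesimal_zero)

theorem inv : Appreciable q⁻¹ :=
  ⟨fun h => hq.2 ((infinitesimal_iff_infinite_inv hq.ne_zero).2 h),
    fun h => hq.1 (infinite_of_infinitesimal_inv hq.ne_zero h)⟩

theorem st_pos (hq0 : 0 ≤ q) : 0 < st q := by
  have hst : IsSt q (st q) := isSt_st' hq.1
  refine lt_of_le_of_ne ((isSt_refl_real 0).le hst (by simpa using hq0)) fun h => hq.2 ?_
  rwa [Infinitesimal, h]

theorem infinitesimal_mul_iff {z : ℝ*} : Infinitesimal (q * z) ↔ Infinitesimal z := by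
  refine ⟨fun h => ?_, infinitesimal_mul_of_not_infinite hq.1⟩
  simpa only [inv_mul_cancel_left₀ hq.ne_zero] using infinitesimal_mul_of_not_infinite hq.inv.1 h

theorem infinite_mul_iff {z : ℝ*} : Infinite (q * z) ↔ Infinite z :=
  ⟨not_imp_not.1 (not_infinite_mul hq.1), infinite_mul_of_not_infinitesimal_infinite hq.2⟩

theorem stENNReal_mul (hq0 : 0 ≤ q) (z : ℝ*) :
    stENNReal (q * z) = ENNReal.ofReal (st q) * stENNReal z := by
  have hst := hq.st_pos hq0
  unfold stENNReal
  by_cases hz : Infinite z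
  · rw [if_pos (hq.infinite_mul_iff.2 hz), if_pos hz, mul_top (ofReal_pos.2 hst).ne']
  · rw [if_neg (mt hq.infinite_mul_iff.1 hz), if_neg hz, st_mul hq.1 hz, ofReal_mul hst.le]

end Appreciable

end Hyperreal

theorem scaleProj_surjective {X : Type*} [MetricSpace X] (α : ℝ*) :
    Function.Surjective (scaleProj (X := X) α) :=
  Quot.exists_rep

theorem Quot.bijective_of_mk_eq_mk {α : Type*} {r s : α → α → Prop}
    (hsr : ∀ x y, s x y → r x y) {h : Quot r → Quot s} (hh : ∀ x, h (Quot.mk r x) = Quot.mk s x) :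
    Function.Bijective h := by
  refine ⟨Quot.ind fun x => Quot.ind fun y hxy => ?_, Quot.ind fun x => ⟨_, hh x⟩⟩
  rw [hh, hh] at hxy
  exact Quot.eq.2 ((Quot.eq.1 hxy).mono hsr)

namespace TopologicalSpace

abbrev ballTopology {A : Type*} (d : A → A → ℝ≥0∞) : TopologicalSpace A :=
  generateFrom {B | ∃ c r, B = {y | d c y < r}}

theorem induced_ballTopology_of_map_eq_mul {A B : Type*} {dA : A → A → ℝ≥0∞}
    {dB : B → B → ℝ≥0∞} {h : A → B} (hh : Function.Surjective h) {c : ℝ≥0∞} (hc0 : c ≠ 0)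
    (hctop : c ≠ ⊤) (hd : ∀ a a', dB (h a) (h a') = c * dA a a') :
    (ballTopology dB).induced h = ballTopology dA := by
  rw [ballTopology, induced_generateFrom_eq, ballTopology]
  congr 1
  ext U
  constructor
  · rintro ⟨_, ⟨b, r, rfl⟩, rfl⟩
    obtain ⟨a, rfl⟩ := hh b
    refine ⟨a, r / c, Set.ext fun a' => ?_⟩
    simp only [Set.mem_preimage, Set.mem_setOf_eq, hd]
    rw [ENNReal.lt_div_iff_mul_lt (Or.inl hc0) (Or.inl hctop), mul_comm]
  · rintro ⟨a, r, rfl⟩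
    refine ⟨_, ⟨h a, c * r, rfl⟩, Set.ext fun a' => ?_⟩
    simp only [Set.mem_preimage, Set.mem_setOf_eq, hd]
    exact ENNReal.mul_lt_mul_iff_right hc0 hctop

theorem isOpen_induced_preimage_iff {A B : Type*} {t : TopologicalSpace B} {h : A → B}
    (hh : Function.Surjective h) {s : Set B} :
    IsOpen[t.induced h] (h ⁻¹' s) ↔ IsOpen[t] s := by
  rw [isOpen_induced_iff]
  exact ⟨fun ⟨u, hu, he⟩ => hh.preimage_injective he ▸ hu, fun hs => ⟨s, hs, rfl⟩⟩

end TopologicalSpace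

/-- If `β/α` is not infinitesimal (with `0 < β ≤ α`), the relations `≈_α` and `≈_β`
coincide and the transition map `π_{β,α} : X_α → X_β` is a homeomorphism for the
topologies induced by the generalized distances `δ_α` and `δ_β`. -/
theorem scaling_transition_homeomorph {X : Type*} [MetricSpace X]
    (α β : ℝ*) (hβ : 0 < β) (hβα : β ≤ α) (hni : ¬ Infinitesimal (β / α))
    (δα : Scaled X α → Scaled X α → ℝ≥0∞) (δβ : Scaled X β → Scaled X β → ℝ≥0∞)
    (hδα : ∀ x y : ((hyperfilter ℕ : Filter ℕ)).Germ X,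
      (Infinite (α * hdist x y) → δα (scaleProj α x) (scaleProj α y) = ⊤) ∧
      (¬ Infinite (α * hdist x y) →
        δα (scaleProj α x) (scaleProj α y) = ENNReal.ofReal (st (α * hdist x y))))
    (hδβ : ∀ x y : ((hyperfilter ℕ : Filter ℕ)).Germ X,
      (Infinite (β * hdist x y) → δβ (scaleProj β x) (scaleProj β y) = ⊤) ∧
      (¬ Infinite (β * hdist x y) →
        δβ (scaleProj β x) (scaleProj β y) = ENNReal.ofReal (st (β * hdist x y)))) :
    (∀ x y : ((hyperfilter ℕ : Filter ℕ)).Germ X,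
      Infinitesimal (α * hdist x y) ↔ Infinitesimal (β * hdist x y)) ∧
    (∀ h : Scaled X α → Scaled X β,
      (∀ x, h (scaleProj α x) = scaleProj β x) →
      Function.Bijective h ∧
      (∀ s : Set (Scaled X β),
        IsOpen[generateFrom {B : Set (Scaled X β) | ∃ c r, B = {y | δβ c y < r}}] s ↔
        IsOpen[generateFrom {B : Set (Scaled X α) | ∃ c r, B = {y | δα c y < r}}]
          (h ⁻¹' s))) := by
  have hα : 0 < α := hβ.trans_le hβα
  have hq : Appreciable (β / α) := ⟨not_infinite_div_of_le hβ.le hβα, hni⟩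
  have hq0 : 0 ≤ β / α := (div_pos hβ hα).le
  have hmul : ∀ z, β * z = β / α * (α * z) := fun z => by field_simp
  have hrel : ∀ z, Infinitesimal (α * z) ↔ Infinitesimal (β * z) := fun z => by
    rw [hmul, hq.infinitesimal_mul_iff]
  refine ⟨fun x y => hrel _, fun h hh => ?_⟩
  have hbij : Function.Bijective h := Quot.bijective_of_mk_eq_mk (fun x y => (hrel _).2) hh
  have hδ : ∀ a a', δβ (h a) (h a') = ENNReal.ofReal (st (β / α)) * δα a a' := by
    intro a a'
    obtain ⟨x, rfl⟩ := scaleProj_surjective α a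
    obtain ⟨y, rfl⟩ := scaleProj_surjective α a'
    rw [hh, hh, eq_stENNReal_iff.2 (hδα x y), eq_stENNReal_iff.2 (hδβ x y), hmul,
      hq.stENNReal_mul hq0]
  have hst : ENNReal.ofReal (st (β / α)) ≠ 0 := (ofReal_pos.2 (hq.st_pos hq0)).ne'
  refine ⟨hbij, fun s => ?_⟩
  change IsOpen[ballTopology δβ] s ↔ IsOpen[ballTopology δα] (h ⁻¹' s)
  rw [← induced_ballTopology_of_map_eq_mul hbij.2 hst ofReal_ne_top hδ,
    isOpen_induced_preimage_iff hbij.2]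
end

section
/- Let α β : ℝ* with 0 < β ≤ α and suppose β/α is infinitesimal. Then for every ζ : X_β, the fiber π_{β,α}⁻¹({ζ}) is an open subset of X_α for the topology induced by δ_α. (Equivalently: for all x y : *X, if δ_α (π_α x) (π_α y) ≠ ⊤ then π_β x = π_β y, so each fiber is a union of metric components of X_α, which are open.) -/
open Filter Hyperreal ENNReal

open Topology TopologicalSpace

/-!
Points at finite `δ_α`-distance have `α * *d x y` finite, so
`β * *d x y = (β / α) * (α * *d x y)` is infinitesimal times finite, i.e. `x ≈_β y`.
Hence `π_{β,α}` is constant on each set `{y | δ_α c y < ⊤}`; these are open balls and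
cover every fiber, so the fibers are open.
-/

theorem Hyperreal.Infinitesimal.mul_not_infinite {x y : ℝ*} (hx : Infinitesimal x)
    (hy : ¬Infinite y) : Infinitesimal (x * y) := by
  obtain ⟨s, hs⟩ := exists_st_of_not_infinite hy
  have hxy := IsSt.mul hx hs
  rwa [zero_mul] at hxy

theorem Hyperreal.infinitesimal_mul_of_infinitesimal_div {α β t : ℝ*} (hα : α ≠ 0)
    (hβα : Infinitesimal (β / α)) (ht : ¬Infinite (α * t)) : Infinitesimal (β * t) := by
  rw [← div_mul_cancel₀ β hα, mul_assoc]
  exact hβα.mul_not_infinite ht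

theorem hdist_self_s15 {X : Type*} [MetricSpace X]
    (x : ((hyperfilter ℕ : Filter ℕ)).Germ X) : hdist x x = 0 := by
  induction x using Filter.Germ.inductionOn with
  | h f => exact congrArg _ (funext fun n => dist_self (f n))

theorem isOpen_generateFrom_balls_preimage {Y Z : Type*} (δ : Y → Y → ℝ≥0∞)
    (hδ : ∀ c, δ c c ≠ ⊤) (f : Y → Z) (hf : ∀ c y, δ c y ≠ ⊤ → f y = f c) (z : Z) :
    IsOpen[generateFrom {B : Set Y | ∃ c r, B = {y | δ c y < r}}] (f ⁻¹' {z}) := by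
  let := generateFrom {B : Set Y | ∃ c r, B = {y | δ c y < r}}
  refine isOpen_iff_forall_mem_open.2 fun c hc => ⟨{y | δ c y < ⊤}, ?_, ?_, ?_⟩
  · intro y hy
    rw [Set.mem_preimage, hf c y hy.ne]
    exact hc
  · exact GenerateOpen.basic _ ⟨c, ⊤, rfl⟩
  · exact (hδ c).lt_top

theorem scaleProj_eq_of_ne_top {X : Type*} [MetricSpace X] {α β : ℝ*} (hα : α ≠ 0)
    (hinf : Infinitesimal (β / α)) (δα : Scaled X α → Scaled X α → ℝ≥0∞)
    (hδα : ∀ x y, Infinite (α * hdist x y) → δα (scaleProj α x) (scaleProj α y) = ⊤)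
    (x y : ((hyperfilter ℕ : Filter ℕ)).Germ X)
    (hxy : δα (scaleProj α x) (scaleProj α y) ≠ ⊤) : scaleProj β x = scaleProj β y :=
  Quot.sound <| infinitesimal_mul_of_infinitesimal_div hα hinf fun hi => hxy (hδα x y hi)

theorem scaledDist_self_eq_zero {X : Type*} [MetricSpace X] {α : ℝ*}
    (δα : Scaled X α → Scaled X α → ℝ≥0∞)
    (hδα : ∀ x y, ¬Infinite (α * hdist x y) →
      δα (scaleProj α x) (scaleProj α y) = ENNReal.ofReal (st (α * hdist x y)))
    (c : Scaled X α) : δα c c = 0 := by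
  induction c using Quot.ind with
  | mk x =>
    have hzero : α * hdist x x = 0 := by rw [hdist_self_s15, mul_zero]
    have := hδα x x (hzero ▸ not_infinite_zero)
    rwa [hzero, ← Hyperreal.coe_zero, st_id_real, ENNReal.ofReal_zero] at this

/-- If `β/α` is infinitesimal (with `0 < β ≤ α`), the fibers of the transition map
`π_{β,α} : X_α → X_β` are open: each fiber is a union of metric components of `X_α`. -/
theorem scaling_transition_fibers_open {X : Type*} [MetricSpace X]
    (α β : ℝ*) (hβ : 0 < β) (hβα : β ≤ α) (hinf : Infinitesimal (β / α))
    (δα : Scaled X α → Scaled X α → ℝ≥0∞)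
    (hδα : ∀ x y : ((hyperfilter ℕ : Filter ℕ)).Germ X,
      (Infinite (α * hdist x y) → δα (scaleProj α x) (scaleProj α y) = ⊤) ∧
      (¬ Infinite (α * hdist x y) →
        δα (scaleProj α x) (scaleProj α y) = ENNReal.ofReal (st (α * hdist x y)))) :
    (∀ x y : ((hyperfilter ℕ : Filter ℕ)).Germ X,
      δα (scaleProj α x) (scaleProj α y) ≠ ⊤ → scaleProj β x = scaleProj β y) ∧
    (∀ h : Scaled X α → Scaled X β,
      (∀ x, h (scaleProj α x) = scaleProj β x) →
      ∀ ζ : Scaled X β,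
        IsOpen[generateFrom {B : Set (Scaled X α) | ∃ c r, B = {y | δα c y < r}}]
          (h ⁻¹' {ζ})) := by
  have hα : α ≠ 0 := (hβ.trans_le hβα).ne'
  have hfinite := scaleProj_eq_of_ne_top hα hinf δα fun x y => (hδα x y).1
  refine ⟨hfinite, fun h hcomm ζ => ?_⟩
  refine isOpen_generateFrom_balls_preimage δα (fun c => ?_) h (fun c y => ?_) ζ
  · rw [scaledDist_self_eq_zero δα (fun x y => (hδα x y).2) c]
    exact ENNReal.zero_ne_top
  · induction c using Quot.ind with
    | mk x => induction y using Quot.ind with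
      | mk y =>
        intro hxy
        change h (scaleProj α y) = h (scaleProj α x)
        rw [hcomm, hcomm, hfinite x y hxy]
end

section
/- (Gromov–Hausdorff limits and nonstandard scalings.) Let (X, d) and (F, d_F) be metric spaces, let λ : ℕ → ℝ with λ n > 0 for all n and λ n → 0, and suppose (X, λ_n d) converges to (F, d_F) in the Gromov–Hausdorff sense; concretely, assume there are ε : ℕ → ℝ with ε n > 0 and ε n → 0, and maps δ : ℕ → X → F → ℝ with δ n x y ≥ 0, such that for all n, all x x' : X and all y y' : F: δ n x y ≤ λ n * d x x' + δ n x' y; δ n x y ≤ δ n x y' + d_F y' y; λ n * d x x' ≤ δ n x y + δ n x' y; d_F y y' ≤ δ n x y + δ n x y'; and: for every x : X there is y : F with δ n x y < ε n, and for every y : F there is x : X with δ n x y < ε n. Let ν : ((hyperfilter ℕ : Filter ℕ)).Germ ℕ be infinitely large (for every m : ℕ, the constant germ of m is < ν) and set λ_ν := ν.map λ : ℝ*. Then there exists a map φ : *X → *F such that: (i) for all x y : *X, the hyperreal λ_ν * *d x y - *d_F (φ x) (φ y) is not infinite; (ii) for all x y : *X, if λ_ν * *d x y is not infinite then λ_ν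 * *d x y - *d_F (φ x) (φ y) is infinitesimal; and (iii) for every z : *F there exists x : *X with *d_F (φ x) z infinitesimal. (Hence φ induces an isometry of galactic spaces between the λ_ν-scaling of X and the 1-scaling of F.) -/
/-!
Choose for every `n` a map `f n : X → F` with `δ n x (f n x) < eps n`, and let `φ` send the germ
of `a` to the germ of `n ↦ f (u n) (a n)`, where `u` represents `ν`. The four inequalities for
`δ n` bound the distortion `|lam n * d a a' - d_F (f n a) (f n a')|`, and the distance from
`f n (g n y)` to `y` for a choice `g n` in the other direction, by `2 * eps n`. As `ν` is infinite,
`u` tends to infinity along the hyperfilter, so these bounds tend to `0` along it, and the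
corresponding hyperreals are infinitesimal.
-/
open Filter Hyperreal

/-- `ν.map lam`, regarded as a hyperreal (`λ_ν`). -/
noncomputable def germMapR (ν : ((hyperfilter ℕ : Filter ℕ)).Germ ℕ) (lam : ℕ → ℝ) : ℝ* :=
  ν.map lam

set_option linter.deprecated false

open Topology

theorem Hyperreal.infinitesimal_ofSeq_of_abs_le {s e : ℕ → ℝ}
    (he : Tendsto e (hyperfilter ℕ) (𝓝 0)) (hs : ∀ n, |s n| ≤ e n) :
    Infinitesimal (ofSeq s) :=
  isSt_ofSeq_iff_tendsto.2 (squeeze_zero_norm hs he)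

theorem Filter.Germ.tendsto_hyperfilter_atTop_of_forall_coe_lt {u : ℕ → ℕ}
    (hu : ∀ m : ℕ, (↑m : (hyperfilter ℕ : Filter ℕ).Germ ℕ) < u) :
    Tendsto u (hyperfilter ℕ) atTop :=
  tendsto_atTop.2 fun m => (Germ.coe_lt.1 (hu m)).mono fun _ hn => hn.le

theorem abs_mul_dist_sub_dist_le {X F : Type*} [MetricSpace X] [MetricSpace F]
    (c : ℝ) (δ : X → F → ℝ)
    (h1 : ∀ (x x' : X) (y : F), δ x y ≤ c * dist x x' + δ x' y)
    (h2 : ∀ (x : X) (y y' : F), δ x y ≤ δ x y' + dist y' y)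
    (h3 : ∀ (x x' : X) (y : F), c * dist x x' ≤ δ x y + δ x' y)
    (h4 : ∀ (x : X) (y y' : F), dist y y' ≤ δ x y + δ x y')
    (x x' : X) (y y' : F) :
    |c * dist x x' - dist y y'| ≤ δ x y + δ x' y' := by
  rw [abs_le]
  constructor
  · linarith [h4 x y y', h1 x x' y']
  · linarith [h3 x x' y', h2 x y' y]

theorem gromov_hausdorff_scaling_general {X F : Type*} [MetricSpace X] [MetricSpace F]
    (lam : ℕ → ℝ)
    (eps : ℕ → ℝ)
    (heps0 : Filter.Tendsto eps Filter.atTop (nhds 0))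
    (δ : ℕ → X → F → ℝ)
    (h1 : ∀ n (x x' : X) (y : F), δ n x y ≤ lam n * dist x x' + δ n x' y)
    (h2 : ∀ n (x : X) (y y' : F), δ n x y ≤ δ n x y' + dist y' y)
    (h3 : ∀ n (x x' : X) (y : F), lam n * dist x x' ≤ δ n x y + δ n x' y)
    (h4 : ∀ n (x : X) (y y' : F), dist y y' ≤ δ n x y + δ n x y')
    (h5 : ∀ n (x : X), ∃ y : F, δ n x y < eps n)
    (h6 : ∀ n (y : F), ∃ x : X, δ n x y < eps n)
    (ν : ((hyperfilter ℕ : Filter ℕ)).Germ ℕ)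
    (hν : ∀ m : ℕ, (↑m : ((hyperfilter ℕ : Filter ℕ)).Germ ℕ) < ν) :
    ∃ φ : ((hyperfilter ℕ : Filter ℕ)).Germ X → ((hyperfilter ℕ : Filter ℕ)).Germ F,
      (∀ x y, ¬ Infinite (germMapR ν lam * hdist x y - hdist (φ x) (φ y))) ∧
      (∀ x y, ¬ Infinite (germMapR ν lam * hdist x y) →
        Infinitesimal (germMapR ν lam * hdist x y - hdist (φ x) (φ y))) ∧
      (∀ z, ∃ x, Infinitesimal (hdist (φ x) z)) := by
  choose f hf using h5
  choose g hg using h6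
  induction ν using Germ.inductionOn with | h u =>
  have hε : Tendsto (fun n => 2 * eps (u n)) (hyperfilter ℕ) (𝓝 0) := by
    simpa using ((heps0.comp (Germ.tendsto_hyperfilter_atTop_of_forall_coe_lt hν)).const_mul 2)
  have distortion : ∀ x y, Infinitesimal
      (germMapR u lam * hdist x y - hdist (Germ.map₂ f u x) (Germ.map₂ f u y)) := by
    intro x y
    induction x using Germ.inductionOn with | h a =>
    induction y using Germ.inductionOn with | h b =>
    refine infinitesimal_ofSeq_of_abs_le hε fun n => ?_
    refine (abs_mul_dist_sub_dist_le _ _ (h1 (u n)) (h2 (u n)) (h3 (u n)) (h4 (u n))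
      (a n) (b n) (f (u n) (a n)) (f (u n) (b n))).trans ?_
    linarith [hf (u n) (a n), hf (u n) (b n)]
  refine ⟨Germ.map₂ f u, fun x y => (distortion x y).not_infinite,
    fun x y _ => distortion x y, fun z => ?_⟩
  induction z using Germ.inductionOn with | h c =>
  refine ⟨(fun n => g (u n) (c n) : ℕ → X), infinitesimal_ofSeq_of_abs_le hε fun n => ?_⟩
  rw [abs_of_nonneg dist_nonneg]
  linarith [h4 (u n) (g (u n) (c n)) (f (u n) (g (u n) (c n))) (c n),
    hf (u n) (g (u n) (c n)), hg (u n) (c n)]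

/-- Gromov–Hausdorff limits and nonstandard scalings: if `(X, λ_n d)` converges to
`(F, d_F)` in the Gromov–Hausdorff sense and `ν` is an infinitely large hypernatural,
then there is a map `φ : *X → *F` inducing an isometry of galactic spaces between
the `λ_ν`-scaling of `X` and the `1`-scaling of `F`. -/
theorem gromov_hausdorff_scaling {X F : Type*} [MetricSpace X] [MetricSpace F]
    (lam : ℕ → ℝ) (hlam : ∀ n, 0 < lam n)
    (hlam0 : Filter.Tendsto lam Filter.atTop (nhds 0))
    (eps : ℕ → ℝ) (heps : ∀ n, 0 < eps n)
    (heps0 : Filter.Tendsto eps Filter.atTop (nhds 0))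
    (δ : ℕ → X → F → ℝ) (hδ0 : ∀ n x y, 0 ≤ δ n x y)
    (h1 : ∀ n (x x' : X) (y : F), δ n x y ≤ lam n * dist x x' + δ n x' y)
    (h2 : ∀ n (x : X) (y y' : F), δ n x y ≤ δ n x y' + dist y' y)
    (h3 : ∀ n (x x' : X) (y : F), lam n * dist x x' ≤ δ n x y + δ n x' y)
    (h4 : ∀ n (x : X) (y y' : F), dist y y' ≤ δ n x y + δ n x y')
    (h5 : ∀ n (x : X), ∃ y : F, δ n x y < eps n)
    (h6 : ∀ n (y : F), ∃ x : X, δ n x y < eps n)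
    (ν : ((hyperfilter ℕ : Filter ℕ)).Germ ℕ)
    (hν : ∀ m : ℕ, (↑m : ((hyperfilter ℕ : Filter ℕ)).Germ ℕ) < ν) :
    ∃ φ : ((hyperfilter ℕ : Filter ℕ)).Germ X → ((hyperfilter ℕ : Filter ℕ)).Germ F,
      (∀ x y, ¬ Infinite (germMapR ν lam * hdist x y - hdist (φ x) (φ y))) ∧
      (∀ x y, ¬ Infinite (germMapR ν lam * hdist x y) →
        Infinitesimal (germMapR ν lam * hdist x y - hdist (φ x) (φ y))) ∧
      (∀ z, ∃ x, Infinitesimal (hdist (φ x) z)) :=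
  gromov_hausdorff_scaling_general lam eps heps0 δ h1 h2 h3 h4 h5 h6 ν hν
end
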